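/- arXiv:2001.02273 — 6 statements merged into one kernel-verified Lean document; each statement's English description precedes it below -/
import Mathlib

section
/- Let p₁,...,p_t ∈ (0,1) satisfy (1-p₁)^k = p₁p₂⋯p_{k-1}(1-p_k) for all 2 ≤ k ≤ t and (1-p₁)^{t+1} = p₁p₂⋯p_t. Then 1/2 > p₁ > p₂ > ⋯ > p_t > 1/3. -/
/-!
Write `q = 1 - p₁` and `P k = p₁ ⋯ p_k`. The hypotheses say `P (k-1) - P k = q ^ k`, so
`P` telescopes to `(1 - q) P k = 1 - 2q + q ^ (k+1)`, and `P t = q ^ (t+1)` then forces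
`2q = 1 + q ^ (t+2)`; in particular `q > 1/2`. With `Q = q ^ (t+2)` this gives
`(1 - q) P k = q ^ (k+1) - Q`, hence `p k (q ^ k - Q) = q ^ (k+1) - Q`, i.e.
`p k = q - (1 - q) Q / (q ^ k - Q)`, which decreases as `q ^ k` decreases. At `k = t` the
relation reads `p t = q / (1 + q)`, which exceeds `1/3` because `q > 1/2`.
-/

section Telescoping

variable {p : ℕ → ℝ} {q : ℝ} {t : ℕ} (h1 : p 1 = 1 - q)
  (hrec : ∀ k : ℕ, 2 ≤ k → k ≤ t → q ^ k = (∏ i ∈ Finset.Icc 1 (k - 1), p i) * (1 - p k))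
include h1 hrec

lemma one_sub_mul_prod_Icc {k : ℕ} (hk : k ≤ t) :
    (1 - q) * ∏ i ∈ Finset.Icc 1 k, p i = 1 - 2 * q + q ^ (k + 1) := by
  induction k with
  | zero => rw [Finset.Icc_eq_empty_of_lt zero_lt_one, Finset.prod_empty]; ring
  | succ k ih =>
    rw [Finset.prod_Icc_succ_top (by omega)]
    rcases k with _ | k
    · rw [Finset.Icc_eq_empty_of_lt zero_lt_one, Finset.prod_empty, zero_add, h1]; ring
    · have hstep := hrec (k + 2) (by omega) hk
      rw [show k + 2 - 1 = k + 1 from rfl] at hstep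
      linear_combination (1 - q) * hstep + ih (by omega)

lemma two_mul_eq_one_add_pow (hlast : q ^ (t + 1) = ∏ i ∈ Finset.Icc 1 t, p i) :
    2 * q = 1 + q ^ (t + 2) := by
  linear_combination (1 - q) * hlast + one_sub_mul_prod_Icc h1 hrec le_rfl

lemma mul_pow_sub_eq (hlast : q ^ (t + 1) = ∏ i ∈ Finset.Icc 1 t, p i) (k : ℕ) (hk : 1 ≤ k)
    (hkt : k ≤ t) : p k * (q ^ k - q ^ (t + 2)) = q * q ^ k - q ^ (t + 2) := by
  obtain ⟨k, rfl⟩ : ∃ m, k = m + 1 := ⟨k - 1, by omega⟩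
  linear_combination -(1 - q) * Finset.prod_Icc_succ_top (by omega : 1 ≤ k + 1) p -
    p (k + 1) * one_sub_mul_prod_Icc h1 hrec (by omega : k ≤ t) +
    one_sub_mul_prod_Icc h1 hrec hkt + (p (k + 1) - 1) * two_mul_eq_one_add_pow h1 hrec hlast

end Telescoping

lemma lt_of_mul_sub_eq_mul_sub {q Q a b x y : ℝ} (hq : q < 1) (hQ : 0 < Q) (hQy : Q < y)
    (hyx : y < x) (ha : a * (x - Q) = q * x - Q) (hb : b * (y - Q) = q * y - Q) : b < a := by
  have hbq : (b - q) * (y - Q) = -((1 - q) * Q) := by linear_combination hb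
  have haq : (a - q) * (x - Q) = -((1 - q) * Q) := by linear_combination ha
  have hneg : b - q < 0 := by nlinarith [mul_pos (sub_pos.2 hq) hQ]
  nlinarith [mul_lt_mul_of_neg_left hyx hneg]

lemma one_third_lt_of_mul_pow_sub_eq {q a : ℝ} (n : ℕ) (hq : 1 / 2 < q) (hq1 : q < 1)
    (h : a * (q ^ n - q ^ (n + 2)) = q * q ^ n - q ^ (n + 2)) : 1 / 3 < a := by
  have hfac : q ^ n * (1 - q) * (a * (1 + q) - q) = 0 := by linear_combination h
  have hpos : q ^ n * (1 - q) ≠ 0 := by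
    have := pow_pos (by linarith : (0 : ℝ) < q) n
    exact mul_ne_zero this.ne' (by linarith)
  have ha : a * (1 + q) = q := by
    linear_combination (mul_eq_zero.1 hfac).resolve_left hpos
  nlinarith

/-- If p₁,...,p_t ∈ (0,1) satisfy (1-p₁)^k = p₁⋯p_{k-1}(1-p_k) for 2 ≤ k ≤ t and
(1-p₁)^{t+1} = p₁⋯p_t, then 1/2 > p₁ > p₂ > ⋯ > p_t > 1/3. -/
theorem stmt_3 (t : ℕ) (ht : 2 ≤ t) (p : ℕ → ℝ)
    (hmem : ∀ k : ℕ, 1 ≤ k → k ≤ t → p k ∈ Set.Ioo (0 : ℝ) 1)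
    (heq1 : ∀ k : ℕ, 2 ≤ k → k ≤ t →
      (1 - p 1) ^ k = (∏ i ∈ Finset.Icc 1 (k - 1), p i) * (1 - p k))
    (heq2 : (1 - p 1) ^ (t + 1) = ∏ i ∈ Finset.Icc 1 t, p i) :
    p 1 < 1 / 2 ∧ (∀ k : ℕ, 1 ≤ k → k < t → p (k + 1) < p k) ∧ 1 / 3 < p t := by
  obtain ⟨hp1, hp1'⟩ := hmem 1 le_rfl (by omega)
  have h1 : p 1 = 1 - (1 - p 1) := by ring
  have hfix := two_mul_eq_one_add_pow h1 heq1 heq2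
  have hrel := mul_pow_sub_eq h1 heq1 heq2
  have hQ : 0 < (1 - p 1) ^ (t + 2) := pow_pos (by linarith) _
  have hlt {m n : ℕ} (h : m < n) : (1 - p 1) ^ n < (1 - p 1) ^ m :=
    pow_lt_pow_right_of_lt_one₀ (by linarith) (by linarith) h
  refine ⟨by linarith, fun k hk hkt => ?_, ?_⟩
  · exact lt_of_mul_sub_eq_mul_sub (by linarith) hQ (hlt (by omega)) (hlt (by omega))
      (hrel k hk hkt.le) (hrel (k + 1) (by omega) hkt)
  · exact one_third_lt_of_mul_pow_sub_eq t (by linarith) (by linarith) (hrel t (by omega) le_rfl)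
end

section
/- Let p₁,...,p_t ∈ (0,1) satisfy (1-p₁)^k = p₁p₂⋯p_{k-1}(1-p_k) for 2 ≤ k ≤ t and (1-p₁)^{t+1} = p₁p₂⋯p_t. Then p₁ satisfies the telescoping identity p₁² = (1-p₁)² - (1-p₁)^{t+2}, i.e., p₁ = Σ_{i=2}^{t+1} (1-p₁)^i. -/
/-!
With `q = 1 - p₁` and `Pₖ = p₁ ⋯ pₖ`, the equations say `qᵏ = Pₖ₋₁ - Pₖ` for `1 ≤ k ≤ t`
(trivially for `k = 1`) and `q^(t+1) = Pₜ`, so `q + q² + ⋯ + q^(t+1)` telescopes to `P₀ = 1`.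
Hence `p₁ = 1 - q = q² + ⋯ + q^(t+1)`, and multiplying by `p₁ = 1 - q` collapses this
geometric sum to `q² - q^(t+2)`.
-/

open Finset

theorem sum_prod_Icc_mul_one_sub {R : Type*} [CommRing R] (p : ℕ → R) (n : ℕ) :
    ∑ k ∈ Icc 1 n, (∏ i ∈ Icc 1 (k - 1), p i) * (1 - p k) = 1 - ∏ i ∈ Icc 1 n, p i := by
  induction n with
  | zero => simp
  | succ n ih =>
    rw [sum_Icc_succ_top (by omega), prod_Icc_succ_top (by omega), ih, Nat.add_sub_cancel]
    ring

theorem stmt_4_general (t : ℕ) (p : ℕ → ℝ)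
    (heq1 : ∀ k : ℕ, 2 ≤ k → k ≤ t →
      (1 - p 1) ^ k = (∏ i ∈ Finset.Icc 1 (k - 1), p i) * (1 - p k))
    (heq2 : (1 - p 1) ^ (t + 1) = ∏ i ∈ Finset.Icc 1 t, p i) :
    (p 1) ^ 2 = (1 - p 1) ^ 2 - (1 - p 1) ^ (t + 2) ∧
    p 1 = ∑ i ∈ Finset.Icc 2 (t + 1), (1 - p 1) ^ i := by
  set q := 1 - p 1 with hq
  have hpow : ∀ k ∈ Icc 1 t, q ^ k = (∏ i ∈ Icc 1 (k - 1), p i) * (1 - p k) := by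
    intro k hk
    obtain rfl | h2 : k = 1 ∨ 2 ≤ k := by grind
    · simp [hq]
    · exact heq1 k h2 (mem_Icc.1 hk).2
  have hgeom : ∑ i ∈ Icc 1 (t + 1), q ^ i = 1 := by
    rw [sum_Icc_succ_top (by omega), sum_congr rfl hpow, sum_prod_Icc_mul_one_sub, heq2]
    ring
  have hsum : p 1 = ∑ i ∈ Icc 2 (t + 1), q ^ i := by
    rw [← add_sum_Ioc_eq_sum_Icc (by omega), ← Icc_add_one_left_eq_Ioc, pow_one,
      one_add_one_eq_two] at hgeom
    linarith
  refine ⟨?_, hsum⟩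
  calc p 1 ^ 2 = (∑ i ∈ Ico 2 (t + 1 + 1), q ^ i) * (1 - q) := by
        rw [Ico_add_one_right_eq_Icc, ← hsum, hq]; ring
    _ = q ^ 2 - q ^ (t + 2) := geom_sum_Ico_mul_neg q (by omega)

/-- Under the same system of equations, p₁ satisfies the telescoping identity
p₁² = (1-p₁)² - (1-p₁)^{t+2}, i.e. p₁ = Σ_{i=2}^{t+1} (1-p₁)^i. -/
theorem stmt_4 (t : ℕ) (ht : 2 ≤ t) (p : ℕ → ℝ)
    (hmem : ∀ k : ℕ, 1 ≤ k → k ≤ t → p k ∈ Set.Ioo (0 : ℝ) 1)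
    (heq1 : ∀ k : ℕ, 2 ≤ k → k ≤ t →
      (1 - p 1) ^ k = (∏ i ∈ Finset.Icc 1 (k - 1), p i) * (1 - p k))
    (heq2 : (1 - p 1) ^ (t + 1) = ∏ i ∈ Finset.Icc 1 t, p i) :
    (p 1) ^ 2 = (1 - p 1) ^ 2 - (1 - p 1) ^ (t + 2) ∧
    p 1 = ∑ i ∈ Finset.Icc 2 (t + 1), (1 - p 1) ^ i :=
  stmt_4_general t p heq1 heq2
end

section
/- For each integer t ≥ 1, the polynomial equation x^{t+2} - 2x + 1 = 0 has a unique root x* in the open interval (1/2, 1), and writing x* = 1/2 + δ_t, the quantity δ_t satisfies δ_t ≤ 2^{-(t+1)}. -/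
/-!
Put `f(x) = x^(t+2) - 2x + 1`. Then `f(1/2) > 0`, `f(1) = 0` and `f` is strictly convex on `[0, ∞)`,
so `f` has at most one zero in `[0, 1)`, and a zero there lies to the left of every point of
`[0, 1)` where `f ≤ 0`. The point `x₀ = 1/2 + 2^-(t+1) = (1 + 2^-t)/2` is such a point: `f(x₀) ≤ 0`
amounts to `(1 + 2^-t)^(t+2) ≤ 4`, which for `t ≥ 2` follows from `t + 2 ≤ 2^t` and
`(1 + 1/m)^m ≤ e`. The intermediate value theorem on `[1/2, x₀]` gives the root.
-/

open Set

lemma Nat.add_two_le_two_pow {t : ℕ} (ht : 2 ≤ t) : t + 2 ≤ 2 ^ t := by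
  obtain ⟨s, rfl⟩ := Nat.exists_eq_add_of_le' ht
  have := s.lt_two_pow_self
  rw [pow_add]
  omega

lemma one_add_half_pow_pow_le_four {t : ℕ} (ht : 1 ≤ t) : (1 + (1 / 2 : ℝ) ^ t) ^ (t + 2) ≤ 4 := by
  rcases ht.eq_or_lt with rfl | ht
  · norm_num
  calc (1 + (1 / 2 : ℝ) ^ t) ^ (t + 2) ≤ (1 + ((2 ^ t : ℕ) : ℝ)⁻¹) ^ (2 ^ t) := by
        rw [one_div_pow, one_div, Nat.cast_pow, Nat.cast_ofNat]
        exact pow_le_pow_right₀ (by simp) (Nat.add_two_le_two_pow ht)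
    _ ≤ Real.exp 1 := Real.one_add_inv_pow_le_exp
    _ ≤ 4 := by linarith [Real.exp_one_lt_d9]

lemma StrictConvexOn.neg_of_nonpos_of_nonpos {s : Set ℝ} {f : ℝ → ℝ} (hf : StrictConvexOn ℝ s f)
    {a b c : ℝ} (ha : a ∈ s) (hc : c ∈ s) (hab : a < b) (hbc : b < c) (hfa : f a ≤ 0)
    (hfc : f c ≤ 0) : f b < 0 :=
  (hf.lt_on_openSegment ha hc (hab.trans hbc).ne (Ioo_subset_openSegment ⟨hab, hbc⟩)).trans_le
    (max_le hfa hfc)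

section PowSubTwoMulAddOne

variable {n : ℕ}

lemma strictConvexOn_pow_sub_two_mul_add_one (hn : 2 ≤ n) :
    StrictConvexOn ℝ (Ici 0) fun x : ℝ ↦ x ^ n - 2 * x + 1 := by
  have haffine : ConvexOn ℝ (Ici (0 : ℝ)) fun x : ℝ ↦ -2 * x + 1 :=
    (LinearMap.mulLeft ℝ (-2 : ℝ)).convexOn (convex_Ici 0) |>.add_const 1
  have hsplit : (fun x : ℝ ↦ x ^ n - 2 * x + 1) = (fun x ↦ x ^ n) + fun x ↦ -2 * x + 1 := by
    ext x
    simp only [Pi.add_apply]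
    ring
  exact hsplit ▸ (strictConvexOn_pow hn).add_convexOn haffine

lemma le_of_pow_sub_two_mul_add_one_eq_zero (hn : 2 ≤ n) {x z : ℝ} (hz : 0 ≤ z) (hx : x < 1)
    (hfx : x ^ n - 2 * x + 1 = 0) (hfz : z ^ n - 2 * z + 1 ≤ 0) : x ≤ z := by
  by_contra! hzx
  have := (strictConvexOn_pow_sub_two_mul_add_one hn).neg_of_nonpos_of_nonpos hz
    (show (1 : ℝ) ∈ Ici 0 by norm_num) hzx hx hfz (by norm_num)
  exact this.ne hfx

end PowSubTwoMulAddOne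

lemma half_add_half_pow_succ_pow_sub_two_mul_add_one_nonpos {t : ℕ} (ht : 1 ≤ t) :
    (1 / 2 + (1 / 2 : ℝ) ^ (t + 1)) ^ (t + 2) - 2 * (1 / 2 + (1 / 2 : ℝ) ^ (t + 1)) + 1 ≤ 0 := by
  have hx₀ : 1 / 2 + (1 / 2 : ℝ) ^ (t + 1) = (1 + (1 / 2 : ℝ) ^ t) / 2 := by ring
  have hpow : (1 / 2 : ℝ) ^ t = 4 / 2 ^ (t + 2) := by
    rw [pow_add, one_div_pow, div_eq_div_iff (by positivity) (by positivity)]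
    ring
  have hle : (1 + (1 / 2 : ℝ) ^ t) ^ (t + 2) / 2 ^ (t + 2) ≤ 4 / 2 ^ (t + 2) := by
    gcongr
    exact one_add_half_pow_pow_le_four ht
  rw [hx₀, div_pow, mul_div_cancel₀ _ two_ne_zero]
  linarith

/-- For each t ≥ 1, the equation x^{t+2} - 2x + 1 = 0 has a unique root in (1/2, 1),
and writing that root as 1/2 + δ_t, one has δ_t ≤ 2^{-(t+1)}. -/
theorem stmt_7 (t : ℕ) (ht : 1 ≤ t) :
    (∃! x : ℝ, x ∈ Set.Ioo (1 / 2 : ℝ) 1 ∧ x ^ (t + 2) - 2 * x + 1 = 0) ∧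
    ∀ x : ℝ, x ∈ Set.Ioo (1 / 2 : ℝ) 1 → x ^ (t + 2) - 2 * x + 1 = 0 →
      x - 1 / 2 ≤ (1 / 2 : ℝ) ^ (t + 1) := by
  set x₀ : ℝ := 1 / 2 + (1 / 2 : ℝ) ^ (t + 1) with hx₀
  have hfx₀ : x₀ ^ (t + 2) - 2 * x₀ + 1 ≤ 0 := half_add_half_pow_succ_pow_sub_two_mul_add_one_nonpos ht
  have hδ_pos : 0 < (1 / 2 : ℝ) ^ (t + 1) := by positivity
  have hx₀_lt_one : x₀ < 1 := by
    have : (1 / 2 : ℝ) ^ (t + 1) ≤ (1 / 2) ^ 2 :=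
      pow_le_pow_of_le_one (by norm_num) (by norm_num) (by omega)
    linarith
  have hn : 2 ≤ t + 2 := by omega
  have hroot_le : ∀ x, x < 1 → x ^ (t + 2) - 2 * x + 1 = 0 → x ≤ x₀ := fun x hx hfx ↦
    le_of_pow_sub_two_mul_add_one_eq_zero hn (by linarith) hx hfx hfx₀
  obtain ⟨c, ⟨hc_gt, hc_le⟩, hfc⟩ : ∃ c ∈ Ioc (1 / 2) x₀, c ^ (t + 2) - 2 * c + 1 = 0 :=
    intermediate_value_Ioc' (by linarith) (by fun_prop) ⟨hfx₀, by norm_num⟩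
  refine ⟨⟨c, ⟨⟨hc_gt, by linarith⟩, hfc⟩, fun y ⟨hy, hfy⟩ ↦ le_antisymm ?_ ?_⟩,
    fun x hx hfx ↦ by linarith [hroot_le x hx.2 hfx]⟩
  · exact le_of_pow_sub_two_mul_add_one_eq_zero hn (by linarith) hy.2 hfy hfc.le
  · exact le_of_pow_sub_two_mul_add_one_eq_zero hn (by linarith [hy.1]) (by linarith) hfc hfy.le
end

section
/- Let X = (X₁,...,Xₙ) be a random vector with values in a finite set, and suppose Y is constructed by choosing an index I uniformly at random from {0,...,n-1}, keeping X₁,...,X_I, and resampling the remaining coordinates from their conditional distribution given X₁,...,X_I (independently of X_{I+1},...,Xₙ). Then for any real-valued function f, Var(f(X)) ≤ (n/2)·E[(f(X) - f(Y))²]. -/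
open Classical in
/-- The probability mass of the set of configurations agreeing with x on the first
i coordinates. -/
noncomputable def prefixMass {S : Type*} [Fintype S] (n : ℕ)
    (p : (Fin n → S) → ℝ) (i : ℕ) (x : Fin n → S) : ℝ :=
  ∑ z : Fin n → S, if (∀ j : Fin n, (j : ℕ) < i → z j = x j) then p z else 0

/-!
Only the cut point `I = 0` matters: there nothing is kept, so `Y` is an independent copy of
`X` and `E[(f(X) - f(Y))²] = 2 Var f(X)`. Every other cut point contributes a nonnegative
amount, so the average over `I` is at least `2 Var f(X) / n`.
-/

open Finset

section WeightedVariance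

variable {α : Type*} [Fintype α] (p f : α → ℝ)

theorem sum_mul_sub_mean_sq (hp1 : ∑ x, p x = 1) :
    ∑ x, p x * (f x - ∑ z, p z * f z) ^ 2 = ∑ x, p x * f x ^ 2 - (∑ x, p x * f x) ^ 2 := by
  set μ := ∑ z, p z * f z
  calc ∑ x, p x * (f x - μ) ^ 2
      = ∑ x, p x * f x ^ 2 - 2 * μ * ∑ x, p x * f x + μ ^ 2 * ∑ x, p x := by
        simp only [mul_sum, ← sum_sub_distrib, ← sum_add_distrib]
        exact sum_congr rfl fun x _ => by ring
    _ = ∑ x, p x * f x ^ 2 - μ ^ 2 := by rw [hp1]; ring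

theorem sum_sum_mul_mul_sub_sq (hp1 : ∑ x, p x = 1) :
    ∑ x, ∑ y, p x * p y * (f x - f y) ^ 2 =
      2 * ∑ x, p x * (f x - ∑ z, p z * f z) ^ 2 := by
  rw [sum_mul_sub_mean_sq p f hp1]
  calc ∑ x, ∑ y, p x * p y * (f x - f y) ^ 2
      = ∑ x, (p x * f x ^ 2 * ∑ y, p y - 2 * (p x * f x) * ∑ y, p y * f y
          + p x * ∑ y, p y * f y ^ 2) := by
        refine sum_congr rfl fun x _ => ?_
        simp only [mul_sum, ← sum_sub_distrib, ← sum_add_distrib]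
        exact sum_congr rfl fun y _ => by ring
    _ = 2 * (∑ x, p x * f x ^ 2 - (∑ x, p x * f x) ^ 2) := by
        rw [sum_add_distrib, sum_sub_distrib, ← sum_mul, ← sum_mul, ← sum_mul, ← mul_sum, hp1]
        ring

end WeightedVariance

section PrefixResampling

variable {S : Type*} [Fintype S] {n : ℕ} {p : (Fin n → S) → ℝ}

theorem prefixMass_nonneg (hp : ∀ x, 0 ≤ p x) (i : ℕ) (x : Fin n → S) :
    0 ≤ prefixMass n p i x :=
  sum_nonneg fun z _ => by split_ifs <;> simp [hp z]

theorem prefixMass_zero (hp1 : ∑ x, p x = 1) (x : Fin n → S) : prefixMass n p 0 x = 1 := by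
  simp [prefixMass, hp1]

variable (n p) in
open Classical in
/-- `E[(f(X) - f(Y))²]` when `Y` keeps the first `i` coordinates of `X` and resamples the rest. -/
noncomputable def prefixResampleEnergy (f : (Fin n → S) → ℝ) (i : ℕ) : ℝ :=
  ∑ x : Fin n → S, ∑ y : Fin n → S,
    p x * (if (∀ j : Fin n, (j : ℕ) < i → y j = x j) then p y / prefixMass n p i x else 0) *
      (f x - f y) ^ 2

theorem prefixResampleEnergy_nonneg (hp : ∀ x, 0 ≤ p x) (f : (Fin n → S) → ℝ) (i : ℕ) :
    0 ≤ prefixResampleEnergy n p f i := by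
  refine sum_nonneg fun x _ => sum_nonneg fun y _ => mul_nonneg (mul_nonneg (hp x) ?_) (sq_nonneg _)
  split_ifs
  exacts [div_nonneg (hp y) (prefixMass_nonneg hp i x), le_rfl]

theorem prefixResampleEnergy_zero (hp1 : ∑ x, p x = 1) (f : (Fin n → S) → ℝ) :
    prefixResampleEnergy n p f 0 = 2 * ∑ x, p x * (f x - ∑ z, p z * f z) ^ 2 := by
  rw [← sum_sum_mul_mul_sub_sq p f hp1]
  simp [prefixResampleEnergy, prefixMass_zero hp1]

end PrefixResampling

open Classical in
/-- Let X be a random vector with mass function p on a finite state space, and let Y be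
obtained by choosing I uniformly in {0,...,n-1}, keeping X₁,...,X_I and resampling the
remaining coordinates from their conditional distribution given the kept prefix,
independently of the rest of X. Then Var(f(X)) ≤ (n/2)·E[(f(X) - f(Y))²]. -/
theorem stmt_13 {S : Type*} [Fintype S] (n : ℕ) (hn : 0 < n)
    (p : (Fin n → S) → ℝ) (hp : ∀ x, 0 ≤ p x) (hp1 : ∑ x : Fin n → S, p x = 1)
    (f : (Fin n → S) → ℝ) :
    ∑ x : Fin n → S, p x * (f x - ∑ z : Fin n → S, p z * f z) ^ 2 ≤
      (n / 2 : ℝ) *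
        ((1 / n : ℝ) * ∑ i ∈ Finset.range n, ∑ x : Fin n → S, ∑ y : Fin n → S,
          p x * (if (∀ j : Fin n, (j : ℕ) < i → y j = x j)
                  then p y / prefixMass n p i x else 0) * (f x - f y) ^ 2) := by
  change _ ≤ (n / 2 : ℝ) * ((1 / n : ℝ) * ∑ i ∈ range n, prefixResampleEnergy n p f i)
  have hn' : (n : ℝ) ≠ 0 := Nat.cast_ne_zero.mpr hn.ne'
  calc ∑ x, p x * (f x - ∑ z, p z * f z) ^ 2
      = prefixResampleEnergy n p f 0 / 2 := by rw [prefixResampleEnergy_zero hp1]; ring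
    _ ≤ (∑ i ∈ range n, prefixResampleEnergy n p f i) / 2 := by
        gcongr
        exact single_le_sum (fun i _ => prefixResampleEnergy_nonneg hp f i) (mem_range.mpr hn)
    _ = (n / 2 : ℝ) * ((1 / n : ℝ) * ∑ i ∈ range n, prefixResampleEnergy n p f i) := by
        field_simp
end

section
/- Let G be the type-(s,t) bipartite graph on [n] ∪ [n]', with an edge between i and j' if and only if -s ≤ j - i ≤ t. Suppose vertices 1,...,i-1 have been matched to distinct right-vertices forming a partial matching extendable to a perfect matching, and suppose after matching, the unmatched right-vertices are {v₁' < ⋯ < v_{n-i+1}'} with v₁ > i - s. Then matching i+k-1 to v_k' for each 1 ≤ k ≤ n-i+1 yields a perfect matching of G (i.e., the partial matching is completable greedily). -/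
/-! A strictly increasing sequence of naturals grows by at least one per step, so
`v k ≥ v 0 + k > i - s + k` and `v k ≤ v last - (n - i - k) ≤ i + k`: the greedy pairing even
stays on or below the diagonal, which is stronger than the upper band bound. -/

theorem StrictMono.add_sub_le_of_le {m : ℕ} {v : Fin m → ℕ} (hv : StrictMono v) {a b : Fin m}
    (hab : a ≤ b) : v a + (b - a : ℕ) ≤ v b := by
  obtain ⟨d, hd⟩ : ∃ d, (b : ℕ) = a + d := ⟨b - a, by omega⟩
  induction d generalizing b with
  | zero => simp [Fin.ext hd]
  | succ d ih =>
    have hlt : (a : ℕ) + d < m := by omega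
    have hprev := ih (b := ⟨a + d, hlt⟩) (Fin.mk_le_mk.mpr (by omega)) rfl
    have hstep : v ⟨a + d, hlt⟩ < v b := hv (Fin.mk_lt_of_lt_val (by omega))
    simp only at hprev
    omega

theorem stmt_16_general (s t n i : ℕ)
    (v : Fin (n - i + 1) → ℕ) (hmono : StrictMono v)
    (hrange : ∀ k, 1 ≤ v k ∧ v k ≤ n)
    (hv1 : (i : ℤ) - (s : ℤ) < (v ⟨0, Nat.succ_pos _⟩ : ℤ)) :
    Function.Injective v ∧
    ∀ k : Fin (n - i + 1),
      -(s : ℤ) ≤ (v k : ℤ) - ((i : ℤ) + (k : ℕ)) ∧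
      (v k : ℤ) - ((i : ℤ) + (k : ℕ)) ≤ (t : ℤ) := by
  refine ⟨hmono.injective, fun k => ?_⟩
  have hfirst : v 0 + k ≤ v k := by
    simpa using hmono.add_sub_le_of_le (Fin.zero_le k)
  have hlast : v k + (n - i - k) ≤ v (Fin.last _) := by
    simpa using hmono.add_sub_le_of_le (Fin.le_last k)
  have hlast_le : v (Fin.last _) ≤ n := (hrange _).2
  have hk : (k : ℕ) ≤ n - i := Nat.lt_succ_iff.mp k.isLt
  change (i : ℤ) - s < (v 0 : ℤ) at hv1
  omega

/-- In the type-(s,t) bipartite graph on [n] ∪ [n]' (edge between i and j' iff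
-s ≤ j - i ≤ t), suppose vertices 1,...,i-1 have been matched and the unmatched
right-vertices are v₁' < ⋯ < v_{n-i+1}' with v₁ > i - s. Then matching the left
vertex i+k-1 to v_k' for 1 ≤ k ≤ n-i+1 yields a perfect matching: the assignment
is injective and every pair satisfies the band constraint -s ≤ v_k - (i+k-1) ≤ t. -/
theorem stmt_16 (s t n i : ℕ) (hs : 1 ≤ s) (ht : 1 ≤ t) (hi : 1 ≤ i) (hin : i ≤ n + 1)
    (v : Fin (n - i + 1) → ℕ) (hmono : StrictMono v)
    (hrange : ∀ k, 1 ≤ v k ∧ v k ≤ n)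
    (hv1 : (i : ℤ) - (s : ℤ) < (v ⟨0, Nat.succ_pos _⟩ : ℤ)) :
    Function.Injective v ∧
    ∀ k : Fin (n - i + 1),
      -(s : ℤ) ≤ (v k : ℤ) - ((i : ℤ) + (k : ℕ)) ∧
      (v k : ℤ) - ((i : ℤ) + (k : ℕ)) ≤ (t : ℤ) :=
  stmt_16_general s t n i v hmono hrange hv1
end

section
/- Every permutation π of [n] satisfying -t ≤ π(i) - i ≤ 1 for all i is a product of disjoint cycles, each of which acts on a set of consecutive integers {a, a+1, ..., a+k} with k ≤ t, cyclically shifting them (π(a+j) = a+j+1 for j < k and π(a+k) = a). -/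
/-!
Since `π i ≤ i + 1`, the cycle of `π` through the smallest point `s` not yet covered can only
climb one step at a time: if `π m = s`, then `π j = j + 1` for `s ≤ j < m` (otherwise two points
would share an image), so `π` cyclically shifts the block `[s, m]`, which has at most `t + 1`
elements because `π m ≥ m - t`. The points above `m` are again permuted among themselves, and
one recurses.
-/

/-- `IsConsecBlockCycles n π L` says the permutation π of [n] is the product of
disjoint cycles on consecutive blocks of sizes given by the list L: the k-th block
occupies positions [ (L.take k).sum, (L.take (k+1)).sum ), and π cyclically shifts
each block (π(j) = j + 1 inside a block, and the last element maps to the first). -/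
def IsConsecBlockCycles (n : ℕ) (π : Equiv.Perm (Fin n)) (L : List ℕ) : Prop :=
  L.sum = n ∧ (∀ ℓ ∈ L, 1 ≤ ℓ) ∧
  ∀ k < L.length, ∀ j : ℕ, (L.take k).sum ≤ j → j < (L.take (k + 1)).sum →
    ∀ hj : j < n,
      (π ⟨j, hj⟩ : ℕ) = if j + 1 < (L.take (k + 1)).sum then j + 1 else (L.take k).sum

namespace IsConsecBlockCycles

variable {n : ℕ} {π : Equiv.Perm (Fin n)}

/-- The blocks of `L` tile `[s, n)` instead of `[0, n)`. -/
def From (s n : ℕ) (π : Equiv.Perm (Fin n)) (L : List ℕ) : Prop :=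
  s + L.sum = n ∧ (∀ ℓ ∈ L, 1 ≤ ℓ) ∧
  ∀ k < L.length, ∀ j : ℕ, s + (L.take k).sum ≤ j → j < s + (L.take (k + 1)).sum →
    ∀ hj : j < n,
      (π ⟨j, hj⟩ : ℕ) =
        if j + 1 < s + (L.take (k + 1)).sum then j + 1 else s + (L.take k).sum

theorem of_from_zero {L : List ℕ} (h : From 0 n π L) : IsConsecBlockCycles n π L := by
  simpa [From, IsConsecBlockCycles] using h

theorem from_self_nil : From n n π [] := by
  simp [From]

theorem From.cons {s e : ℕ} {L : List ℕ} (hse : s < e)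
    (hcycle : ∀ j : Fin n, s ≤ j → (j : ℕ) < e →
      (π j : ℕ) = if (j : ℕ) + 1 < e then (j : ℕ) + 1 else s)
    (h : From e n π L) : From s n π ((e - s) :: L) := by
  obtain ⟨hsum, hpos, hblocks⟩ := h
  refine ⟨by simp only [List.sum_cons]; omega, ?_, ?_⟩
  · exact List.forall_mem_cons.mpr ⟨by omega, hpos⟩
  · rintro (_ | k) hk j hj₁ hj₂ hj
    · simp only [List.take_zero, List.sum_nil, add_zero, List.take_succ_cons,
        List.sum_cons] at hj₁ hj₂ ⊢
      rw [show s + (e - s) = e by omega] at hj₂ ⊢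
      exact hcycle ⟨j, hj⟩ hj₁ hj₂
    · have hshift : ∀ r, s + (((e - s) :: L).take (r + 1)).sum = e + (L.take r).sum := by
        intro r
        simp only [List.take_succ_cons, List.sum_cons]
        omega
      simp only [hshift] at hj₁ hj₂ ⊢
      exact hblocks k (by simpa using hk) j hj₁ hj₂ hj

end IsConsecBlockCycles

namespace Equiv.Perm

variable {n : ℕ} {π : Equiv.Perm (Fin n)}

def StabilizesFrom (π : Equiv.Perm (Fin n)) (s : ℕ) : Prop :=
  ∀ i : Fin n, s ≤ (π i : ℕ) ↔ s ≤ (i : ℕ)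

section CycleThroughBottom

variable {s : ℕ} {m : Fin n} (hup : ∀ i : Fin n, (π i : ℕ) ≤ i + 1)
  (hs : π.StabilizesFrom s) (hm : (π m : ℕ) = s)
include hs hm

theorem StabilizesFrom.le_of_apply_eq : s ≤ m :=
  (hs m).1 hm.ge

include hup

theorem StabilizesFrom.apply_eq_succ_of_lt (j : Fin n) (hsj : s ≤ j) (hjm : j < m) :
    (π j : ℕ) = j + 1 := by
  induction j using WellFoundedLT.induction with
  | _ j ih =>
    have hsπ : s ≤ π j := (hs j).2 hsj
    have hne : (π j : ℕ) ≠ s := fun h =>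
      hjm.ne (π.injective (Fin.ext (h.trans hm.symm)))
    by_contra hsucc
    let i : Fin n := ⟨π j - 1, by omega⟩
    have hij : i < j := by
      have := hup j
      simp only [Fin.lt_def, i]; omega
    have hi := ih i hij (by simp only [i]; omega) (hij.trans hjm)
    have : i = j := π.injective (Fin.ext (by simp only [i] at hi ⊢; omega))
    exact hij.ne this

theorem StabilizesFrom.succ : π.StabilizesFrom (m + 1) := by
  have hsm := hs.le_of_apply_eq hm
  intro i
  constructor
  · intro hi
    by_contra! him
    rcases lt_or_ge (i : ℕ) s with his | his
    · have := (hs i).not.mpr (by omega)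
      omega
    rcases (Nat.lt_succ_iff.mp him).lt_or_eq with him | him
    · have := hs.apply_eq_succ_of_lt hup hm i his him
      omega
    · rw [show i = m from Fin.ext him] at hi
      omega
  · intro hi
    by_contra! him
    have hsi : s ≤ π i := (hs i).2 (by omega)
    rcases hsi.lt_or_eq with hsi | hsi
    · let i' : Fin n := ⟨π i - 1, by omega⟩
      have hi' := hs.apply_eq_succ_of_lt hup hm i' (by simp only [i']; omega)
        (by simp only [Fin.lt_def, i']; omega)
      have : i = i' := π.injective (Fin.ext (by simp only [i'] at hi' ⊢; omega))
      rw [this] at hi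
      simp only [i'] at hi
      omega
    · have : i = m := π.injective (Fin.ext (hsi.symm.trans hm.symm))
      rw [this] at hi
      omega

theorem StabilizesFrom.apply_eq_of_le (j : Fin n) (hsj : s ≤ j) (hjm : j ≤ m) :
    (π j : ℕ) = if (j : ℕ) + 1 < (m : ℕ) + 1 then (j : ℕ) + 1 else s := by
  rcases hjm.lt_or_eq with hjm | rfl
  · rw [if_pos (by simpa using hjm)]
    exact hs.apply_eq_succ_of_lt hup hm j hsj hjm
  · rw [if_neg (by omega), hm]

end CycleThroughBottom

theorem exists_isConsecBlockCyclesFrom {t : ℕ} (hup : ∀ i : Fin n, (π i : ℕ) ≤ i + 1)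
    (hdown : ∀ i : Fin n, (i : ℕ) ≤ π i + t) (s : ℕ) (hsn : s ≤ n)
    (hs : π.StabilizesFrom s) :
    ∃ L : List ℕ, (∀ ℓ ∈ L, ℓ ≤ t + 1) ∧ IsConsecBlockCycles.From s n π L := by
  rcases hsn.lt_or_eq with hsn | rfl
  · set m := π.symm ⟨s, hsn⟩
    have hm : (π m : ℕ) = s := by simp [m]
    have hsm := hs.le_of_apply_eq hm
    obtain ⟨L, hLt, hL⟩ :=
      exists_isConsecBlockCyclesFrom hup hdown (m + 1) m.isLt (hs.succ hup hm)
    refine ⟨(m + 1 - s) :: L, ?_, hL.cons (by omega) fun j hsj hjm => ?_⟩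
    · have := hdown m
      exact List.forall_mem_cons.mpr ⟨by omega, hLt⟩
    · exact hs.apply_eq_of_le hup hm j hsj (Nat.lt_succ_iff.mp hjm)
  · exact ⟨[], by simp, IsConsecBlockCycles.from_self_nil⟩
termination_by n - s

end Equiv.Perm

theorem stmt_19_general (n t : ℕ) (π : Equiv.Perm (Fin n))
    (hπ : ∀ i : Fin n, -(t : ℤ) ≤ (π i : ℤ) - (i : ℤ) ∧ (π i : ℤ) - (i : ℤ) ≤ 1) :
    ∃ L : List ℕ, (∀ ℓ ∈ L, ℓ ≤ t + 1) ∧ IsConsecBlockCycles n π L := by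
  have hup : ∀ i : Fin n, (π i : ℕ) ≤ i + 1 := fun i => by have := (hπ i).2; omega
  have hdown : ∀ i : Fin n, (i : ℕ) ≤ π i + t := fun i => by have := (hπ i).1; omega
  obtain ⟨L, hLt, hL⟩ := π.exists_isConsecBlockCyclesFrom hup hdown 0 n.zero_le
    (by simp [Equiv.Perm.StabilizesFrom])
  exact ⟨L, hLt, .of_from_zero hL⟩

/-- Every permutation π of [n] with -t ≤ π(i) - i ≤ 1 for all i is a product of disjoint
cycles, each acting on a set of consecutive integers of size at most t + 1, cyclically
shifting them. -/
theorem stmt_19 (n t : ℕ) (ht : 1 ≤ t) (π : Equiv.Perm (Fin n))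
    (hπ : ∀ i : Fin n, -(t : ℤ) ≤ (π i : ℤ) - (i : ℤ) ∧ (π i : ℤ) - (i : ℤ) ≤ 1) :
    ∃ L : List ℕ, (∀ ℓ ∈ L, ℓ ≤ t + 1) ∧ IsConsecBlockCycles n π L :=
  stmt_19_general n t π hπ
end
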